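/- Let d ≥ 2 be an integer and α ∈ (0,2). Set m_α = 2^α Γ(2+α/2) Γ((d+α)/2)/Γ(d/2) and ℓ_α = 2^{α/2} Γ(1+α/2) (1+α/2)^{−α/2} · ((d+α)^{1+α/2}/d) · Γ((d+α)/2)/Γ(d/2). Then for every s ∈ [0,1] one has ℓ_α (1−s)^{1+α/2} ≥ m_α (1 − ((d+α)/d) s), with equality at s₀ = (d−2)/(d+α); in fact ℓ_α is the least constant for which this inequality holds for all s ∈ [0,1]. -/

import Mathlib

open Real

/-- `m_α = 2^α Γ(2+α/2) Γ((d+α)/2)/Γ(d/2)`. -/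
noncomputable def mConst (d : ℕ) (α : ℝ) : ℝ :=
  2 ^ α * Gamma (2 + α / 2) * Gamma (((d : ℝ) + α) / 2) / Gamma ((d : ℝ) / 2)

/-- `ℓ_α = 2^{α/2} Γ(1+α/2) (1+α/2)^{-α/2} ((d+α)^{1+α/2}/d) Γ((d+α)/2)/Γ(d/2)`. -/
noncomputable def ellConst (d : ℕ) (α : ℝ) : ℝ :=
  2 ^ (α / 2) * Gamma (1 + α / 2) / (1 + α / 2) ^ (α / 2) *
    (((d : ℝ) + α) ^ (1 + α / 2) / d) * (Gamma (((d : ℝ) + α) / 2) / Gamma ((d : ℝ) / 2))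

/-!
For `p = 1 + α/2 ≥ 1` the function `s ↦ ℓ_α (1 - s)^p` is convex, and the line
`s ↦ m_α (1 - ((d+α)/d) s)` is its tangent at `s₀ = (d-2)/(d+α)`: the Gamma-function identity
`Γ(2+α/2) = (1+α/2) Γ(1+α/2)` makes the values agree there, and then the slopes agree by a
rational identity. Bernoulli's inequality puts the tangent below the graph, and any admissible
constant `ℓ'` must satisfy `ℓ' (1-s₀)^p ≥ ℓ_α (1-s₀)^p` at the touching point.
-/

/-- `hslope` is the equality of slopes at `s₀`, with `L` eliminated via `hval`. -/
theorem mul_one_sub_mul_le_mul_one_sub_rpow_of_tangent {L M c p s₀ : ℝ} (hL : 0 ≤ L)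
    (hp : 1 ≤ p) (hs₀ : s₀ < 1) (hval : L * (1 - s₀) ^ p = M * (1 - c * s₀))
    (hslope : p * (1 - c * s₀) = c * (1 - s₀)) {s : ℝ} (hs : s ≤ 1) :
    M * (1 - c * s) ≤ L * (1 - s) ^ p := by
  have ha : 0 < 1 - s₀ := by linarith
  set t := (s₀ - s) / (1 - s₀) with ht
  have hfac : 1 - s = (1 - s₀) * (1 + t) := by rw [ht]; field_simp; ring
  have ht_ge : -1 ≤ t := by rw [ht, le_div_iff₀ ha]; linarith
  have hbernoulli : 1 + p * t ≤ (1 + t) ^ p := one_add_mul_self_le_rpow_one_add ht_ge hp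
  calc M * (1 - c * s)
      = M * (1 - c * s₀) + M * (p * (1 - c * s₀)) * t := by
        rw [hslope, ht]; field_simp; ring
    _ = L * (1 - s₀) ^ p * (1 + p * t) := by rw [hval]; ring
    _ ≤ L * (1 - s₀) ^ p * (1 + t) ^ p := by gcongr
    _ = L * (1 - s) ^ p := by rw [hfac, mul_rpow ha.le (by linarith)]; ring

theorem ellConst_pos {d : ℕ} (hd : 0 < d) {α : ℝ} (hα : 0 < α) : 0 < ellConst d α := by
  have hΓ₁ := Gamma_pos_of_pos (show (0 : ℝ) < 1 + α / 2 by positivity)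
  have hΓ₂ := Gamma_pos_of_pos (show (0 : ℝ) < ((d : ℝ) + α) / 2 by positivity)
  have hΓ₃ := Gamma_pos_of_pos (show (0 : ℝ) < (d : ℝ) / 2 by positivity)
  unfold ellConst
  positivity

theorem ellConst_mul_rpow_eq {d : ℕ} (hd : 0 < d) {α : ℝ} (hα : 0 < α) :
    ellConst d α * ((2 + α) / (d + α)) ^ (1 + α / 2) = mConst d α * (2 / d) := by
  set p := 1 + α / 2 with hp
  have hp_pos : 0 < p := by positivity
  have hΓ_succ : Gamma (2 + α / 2) = p * Gamma p := by
    rw [show 2 + α / 2 = p + 1 by ring, Gamma_add_one hp_pos.ne']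
  have htwo_pow : (2 : ℝ) ^ α = 2 ^ (α / 2) * 2 ^ p / 2 := by
    rw [← rpow_add two_pos, show α / 2 + p = α + 1 by ring, rpow_add two_pos, rpow_one]
    ring
  have hp_pow : p ^ p = p * p ^ (α / 2) := by
    rw [show p = 1 + α / 2 from rfl, rpow_add hp_pos, rpow_one]
  have hnum : (2 + α) ^ p = 2 ^ p * p ^ p := by
    rw [show 2 + α = 2 * p by ring, mul_rpow zero_le_two hp_pos.le]
  have hdα : (0 : ℝ) < ((d : ℝ) + α) ^ p := rpow_pos_of_pos (by positivity) p
  have hpα : 0 < p ^ (α / 2) := rpow_pos_of_pos hp_pos _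
  have hΓd : Gamma ((d : ℝ) / 2) ≠ 0 := (Gamma_pos_of_pos (by positivity)).ne'
  rw [ellConst, mConst, ← hp, div_rpow (by positivity) (by positivity), hnum, hp_pow, hΓ_succ,
    htwo_pow]
  field_simp

/-- `ℓ_α` is the least constant such that
`ℓ (1-s)^{1+α/2} ≥ m_α (1 - ((d+α)/d)s)` on `[0,1]`; equality holds at `s₀ = (d-2)/(d+α)`. -/
theorem ell_least_constant (d : ℕ) (hd : 2 ≤ d) (α : ℝ) (hα : α ∈ Set.Ioo (0:ℝ) 2) :
    (∀ s ∈ Set.Icc (0:ℝ) 1,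
      ellConst d α * (1 - s) ^ (1 + α / 2) ≥ mConst d α * (1 - ((d : ℝ) + α) / d * s)) ∧
    ellConst d α * (1 - ((d : ℝ) - 2) / (d + α)) ^ (1 + α / 2) =
      mConst d α * (1 - ((d : ℝ) + α) / d * (((d : ℝ) - 2) / (d + α))) ∧
    (∀ ℓ' : ℝ,
      (∀ s ∈ Set.Icc (0:ℝ) 1,
        ℓ' * (1 - s) ^ (1 + α / 2) ≥ mConst d α * (1 - ((d : ℝ) + α) / d * s)) →
      ellConst d α ≤ ℓ') := by
  have hα₀ : 0 < α := hα.1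
  have hd₀ : 0 < d := by omega
  have hd₂ : (2 : ℝ) ≤ d := by exact_mod_cast hd
  have hdα : (0 : ℝ) < d + α := by positivity
  have hgap : 1 - ((d : ℝ) - 2) / (d + α) = (2 + α) / (d + α) := by field_simp; ring
  have hs₀ : ((d : ℝ) - 2) / (d + α) ∈ Set.Icc (0 : ℝ) 1 :=
    ⟨div_nonneg (by linarith) hdα.le, by rw [div_le_one hdα]; linarith⟩
  have hval : ellConst d α * (1 - ((d : ℝ) - 2) / (d + α)) ^ (1 + α / 2) =
      mConst d α * (1 - ((d : ℝ) + α) / d * (((d : ℝ) - 2) / (d + α))) := by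
    rw [hgap, ellConst_mul_rpow_eq hd₀ hα₀]
    congr 1
    field_simp
    ring
  have hslope : (1 + α / 2) * (1 - ((d : ℝ) + α) / d * (((d : ℝ) - 2) / (d + α))) =
      ((d : ℝ) + α) / d * (1 - ((d : ℝ) - 2) / (d + α)) := by
    rw [hgap]
    field_simp
    ring
  have hpos : 0 < (1 - ((d : ℝ) - 2) / (d + α)) ^ (1 + α / 2) := by
    rw [hgap]; positivity
  refine ⟨fun s hs => ?_, hval, fun ℓ' hℓ' => ?_⟩
  · exact mul_one_sub_mul_le_mul_one_sub_rpow_of_tangent (ellConst_pos hd₀ hα₀).le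
      (by linarith) (by rw [div_lt_one hdα]; linarith) hval hslope hs.2
  · have hℓ's₀ := hℓ' _ hs₀
    rw [← hval] at hℓ's₀
    exact le_of_mul_le_mul_right hℓ's₀ hpos
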